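/- The size of a type class T(P) of sequences of length n over a finite alphabet X satisfies (n+1)^{-|X|}·2^{nH(P)} ≤ |T(P)| ≤ 2^{nH(P)}, where P is an n-type (all probabilities are multiples of 1/n) and H is base-2 entropy. -/

import Mathlib

open Finset

open scoped Nat

/-- count of occurrences of `a` in the tuple `xv` -/
def cnt {α : Type*} [Fintype α] [DecidableEq α] {n : ℕ} (xv : Fin n → α) (a : α) : ℕ :=
  (Finset.univ.filter fun i => xv i = a).card

lemma factorial_le_sub_factorial_mul_pow :
    ∀ (d k : ℕ), d ≤ k → k ! ≤ (k - d)! * k ^ d := by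
  intro d
  induction d with
  | zero => intro k _; simp
  | succ d ih =>
    intro k hdk
    have hd : d ≤ k := Nat.le_of_succ_le hdk
    have h1 : k - d = (k - (d+1)) + 1 := by omega
    calc k ! ≤ (k - d)! * k ^ d := ih k hd
      _ = ((k - (d+1)) + 1) * (k - (d+1))! * k ^ d := by rw [h1, Nat.factorial_succ]
      _ ≤ k * (k - (d+1))! * k ^ d := by
          have : (k - (d+1)) + 1 ≤ k := by omega
          exact Nat.mul_le_mul_right _ (Nat.mul_le_mul_right _ this)
      _ = (k - (d+1))! * k ^ (d+1) := by ring

lemma factorial_mul_pow_le : ∀ (d k : ℕ), k ! * k ^ d ≤ (k + d)! := by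
  intro d
  induction d with
  | zero => simp
  | succ d ih =>
    intro k
    calc k ! * k ^ (d+1) = k * (k ! * k ^ d) := by ring
      _ ≤ k * (k + d)! := Nat.mul_le_mul_left _ (ih k)
      _ ≤ (k + d + 1) * (k + d)! := Nat.mul_le_mul_right _ (by omega)
      _ = (k + (d+1))! := by rw [← Nat.factorial_succ]; ring_nf

lemma key_nat (k c : ℕ) : k ! * k ^ c ≤ c ! * k ^ k := by
  rcases le_total c k with h | h
  · have h1 : k ! ≤ c ! * k ^ (k - c) := by
      have := factorial_le_sub_factorial_mul_pow (k - c) k (by omega)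
      simpa [Nat.sub_sub_self h] using this
    calc k ! * k ^ c ≤ (c ! * k ^ (k - c)) * k ^ c := Nat.mul_le_mul_right _ h1
      _ = c ! * k ^ (k - c + c) := by rw [pow_add]; ring
      _ = c ! * k ^ k := by rw [Nat.sub_add_cancel h]
  · have h1 : k ! * k ^ (c - k) ≤ c ! := by
      have := factorial_mul_pow_le (c - k) k
      rwa [Nat.add_sub_cancel' h] at this
    calc k ! * k ^ c = (k ! * k ^ (c - k)) * k ^ k := by
          rw [mul_assoc, ← pow_add, Nat.sub_add_cancel h]
      _ ≤ c ! * k ^ k := Nat.mul_le_mul_right _ h1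

lemma cnt_comp_equiv {α : Type*} [Fintype α] [DecidableEq α] {n : ℕ}
    (xv : Fin n → α) (σ : Equiv.Perm (Fin n)) : cnt (xv ∘ σ) = cnt xv := by
  funext a
  simp only [cnt]
  rw [← Fintype.card_subtype, ← Fintype.card_subtype]
  exact Fintype.card_congr (σ.subtypeEquiv fun i => Iff.rfl)

lemma card_cnt_mul_prod_factorial {α : Type*} [Fintype α] [DecidableEq α]
    {n : ℕ} (c : α → ℕ) (hc : ∑ a, c a = n) :
    ((univ.filter fun xv : Fin n → α => cnt xv = c).card) * ∏ a, (c a)! = n ! := by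
  classical
  have hcard : Fintype.card (Σ a : α, Fin (c a)) = Fintype.card (Fin n) := by
    simp [hc]
  let e : (Σ a : α, Fin (c a)) ≃ Fin n := Fintype.equivOfCardEq hcard
  set xv₀ : Fin n → α := fun i => (e.symm i).1 with hxv₀
  have hfiber : ∀ a, Fintype.card {i : Fin n // xv₀ i = a} = c a := by
    intro a
    have e1 : {i : Fin n // xv₀ i = a} ≃ {p : Σ a', Fin (c a') // p.1 = a} :=
      e.symm.subtypeEquiv fun i => Iff.rfl
    have e2 : {p : Σ a', Fin (c a') // p.1 = a} ≃ Fin (c a) :=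
      { toFun := fun p => Fin.cast (congrArg c p.2) p.1.2
        invFun := fun j => ⟨⟨a, j⟩, rfl⟩
        left_inv := by rintro ⟨⟨a', j⟩, rfl⟩; rfl
        right_inv := fun j => rfl }
    rw [Fintype.card_congr (e1.trans e2), Fintype.card_fin]
  have hcnt₀ : cnt xv₀ = c := by
    funext a
    rw [cnt, ← hfiber a, Fintype.card_subtype]
  have hmaps : ∀ σ : Equiv.Perm (Fin n), σ ∈ (univ : Finset (Equiv.Perm (Fin n))) →
      xv₀ ∘ σ ∈ univ.filter fun xv : Fin n → α => cnt xv = c := by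
    intro σ _
    simp only [mem_filter, mem_univ, true_and]
    rw [cnt_comp_equiv, hcnt₀]
  have hkey := Finset.card_eq_sum_card_fiberwise hmaps
  have hfib : ∀ xv ∈ univ.filter fun xv : Fin n → α => cnt xv = c,
      (univ.filter fun σ : Equiv.Perm (Fin n) => xv₀ ∘ σ = xv).card = ∏ a, (c a)! := by
    intro xv hxv
    rw [mem_filter] at hxv
    have hxc : cnt xv = c := hxv.2
    have hfib' : ∀ a, Fintype.card {i : Fin n // xv i = a}
        = Fintype.card {i : Fin n // xv₀ i = a} := by
      intro a
      rw [hfiber a, Fintype.card_subtype, ← cnt, hxc]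
    let τ : Fin n ≃ Fin n := Equiv.ofFiberEquiv (f := xv) (g := xv₀)
      (fun a => Fintype.equivOfCardEq (hfib' a))
    have hτ : xv₀ ∘ τ = xv := funext fun i => Equiv.ofFiberEquiv_map _ i
    have hbij : (univ.filter fun σ : Equiv.Perm (Fin n) => xv₀ ∘ σ = xv).card
        = (univ.filter fun g : Equiv.Perm (Fin n) => xv₀ ∘ g = xv₀).card := by
      refine Finset.card_bij' (fun σ _ => σ * τ⁻¹) (fun g _ => g * τ) ?_ ?_ ?_ ?_
      · intro σ hσ
        rw [mem_filter] at hσ ⊢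
        refine ⟨mem_univ _, funext fun i => ?_⟩
        have h1 : xv₀ (σ (τ⁻¹ i)) = xv (τ⁻¹ i) := congrFun hσ.2 (τ⁻¹ i)
        have h2 : xv (τ⁻¹ i) = xv₀ (τ (τ⁻¹ i)) := (congrFun hτ (τ⁻¹ i)).symm
        simpa [Equiv.Perm.mul_apply] using h1.trans (h2.trans (by rw [← Equiv.Perm.mul_apply, mul_inv_cancel, Equiv.Perm.one_apply]))
      · intro g hg
        rw [mem_filter] at hg ⊢
        refine ⟨mem_univ _, funext fun i => ?_⟩
        have h1 : xv₀ (g (τ i)) = xv₀ (τ i) := congrFun hg.2 (τ i)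
        simpa [Equiv.Perm.mul_apply] using h1.trans (congrFun hτ i)
      · intro σ _; group
      · intro g _; group
    rw [hbij, ← Fintype.card_subtype, DomMulAct.stabilizer_card]
    exact Finset.prod_congr rfl fun a _ => by rw [hfiber a]
  rw [Finset.sum_congr rfl hfib, Finset.sum_const, smul_eq_mul] at hkey
  rw [Finset.card_univ, Fintype.card_perm, Fintype.card_fin] at hkey
  exact hkey.symm


/-- Empirical type of a sequence. -/
noncomputable def typeOf {α : Type*} [Fintype α] [DecidableEq α] {n : ℕ} (xv : Fin n → α) :
    α → ℝ :=
  fun a => ((Finset.univ.filter fun i => xv i = a).card : ℝ) / n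

/-- Base-2 Shannon entropy. -/
noncomputable def Hent {α : Type*} [Fintype α] (P : α → ℝ) : ℝ :=
  -∑ x, P x * Real.logb 2 (P x)

theorem stmt8 {α : Type*} [Fintype α] [DecidableEq α] {n : ℕ} (hn : 0 < n)
    (P : α → ℝ) (hP0 : ∀ x, 0 ≤ P x) (hP1 : ∑ x, P x = 1)
    (hntype : ∀ a, ∃ k : ℕ, P a = (k : ℝ) / n) :
    ((n:ℝ) + 1) ^ (-(Fintype.card α : ℝ)) * (2:ℝ) ^ ((n:ℝ) * Hent P) ≤
      (Set.ncard {xv : Fin n → α | typeOf xv = P} : ℝ) ∧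
    (Set.ncard {xv : Fin n → α | typeOf xv = P} : ℝ) ≤ (2:ℝ) ^ ((n:ℝ) * Hent P) := by
  classical
  choose K hK using hntype
  have hnR : (0:ℝ) < n := by exact_mod_cast hn
  have hKcast : ∀ a, (K a : ℝ) = n * P a := fun a => by rw [hK a]; field_simp
  have hKn : ∑ a, K a = n := by
    have h : ((∑ a, K a : ℕ) : ℝ) = (n:ℝ) := by
      push_cast
      simp_rw [hKcast]
      rw [← Finset.mul_sum, hP1, mul_one]
    exact_mod_cast h
  set S : Finset (Fin n → α) := univ.filter fun xv => cnt xv = K with hS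
  -- the set equals the finset S
  have hset : {xv : Fin n → α | typeOf xv = P} = ↑S := by
    ext xv
    simp only [Set.mem_setOf_eq, hS, coe_filter, Set.mem_setOf_eq, mem_univ, true_and]
    constructor
    · intro h
      funext a
      have h1 : ((cnt xv a : ℝ)) / n = P a := congrFun h a
      have h2 : ((cnt xv a : ℝ)) = (K a : ℝ) := by
        rw [hKcast a, ← h1]; field_simp
      exact_mod_cast h2
    · intro h
      funext a
      show ((cnt xv a : ℝ)) / n = P a
      rw [h, hK a]
  have hncard : (Set.ncard {xv : Fin n → α | typeOf xv = P} : ℝ) = (S.card : ℝ) := by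
    rw [hset, Set.ncard_coe_finset]
  -- weights
  set W : (α → ℕ) → ℝ :=
    fun c => ((univ.filter fun xv : Fin n → α => cnt xv = c).card : ℝ) * ∏ a, P a ^ c a with hWdef
  have hcnt_sum : ∀ g : Fin n → α, ∑ a, cnt g a = n := by
    intro g
    have := Finset.card_eq_sum_card_fiberwise (fun i (_ : i ∈ (univ : Finset (Fin n))) =>
      mem_univ (g i))
    simpa [cnt, Finset.card_univ] using this.symm
  have hmapsc : ∀ g : Fin n → α, g ∈ (univ : Finset (Fin n → α)) →
      cnt g ∈ piAntidiag (univ : Finset α) n := by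
    intro g _
    rw [mem_piAntidiag]
    exact ⟨hcnt_sum g, fun a _ => mem_univ a⟩
  have hprod_fiber : ∀ g : Fin n → α, ∏ i, P (g i) = ∏ a, P a ^ cnt g a := by
    intro g
    rw [← Finset.prod_fiberwise_of_maps_to (fun i (_ : i ∈ (univ : Finset (Fin n))) =>
      mem_univ (g i)) (fun i => P (g i))]
    refine Finset.prod_congr rfl fun a _ => ?_
    rw [Finset.prod_congr rfl (fun i hi => by rw [(mem_filter.mp hi).2]), Finset.prod_const]
    rfl
  have hW : ∑ c ∈ piAntidiag (univ : Finset α) n, W c = 1 := by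
    have h1 := Finset.sum_fiberwise_of_maps_to hmapsc (fun g : Fin n → α => ∏ a, P a ^ cnt g a)
    have h2 : ∀ c ∈ piAntidiag (univ : Finset α) n,
        (∑ g ∈ univ.filter fun g : Fin n → α => cnt g = c, ∏ a, P a ^ cnt g a) = W c := by
      intro c _
      rw [Finset.sum_congr rfl (fun g hg => by rw [(mem_filter.mp hg).2]), Finset.sum_const,
        nsmul_eq_mul, hWdef]
    rw [Finset.sum_congr rfl h2] at h1
    rw [h1]
    have h3 : ∑ g : Fin n → α, ∏ a, P a ^ cnt g a = ∑ g : Fin n → α, ∏ i, P (g i) :=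
      Finset.sum_congr rfl fun g _ => (hprod_fiber g).symm
    have h4 : (∑ a, P a) ^ n = ∑ g : Fin n → α, ∏ i, P (g i) := by
      have := Finset.prod_univ_sum (fun _ : Fin n => (univ : Finset α)) (fun _ a => P a)
      simpa [Finset.prod_const, Finset.card_univ, Fintype.piFinset_univ] using this
    rw [h3, ← h4, hP1, one_pow]
  -- key inequality
  have natkey : ∀ c ∈ piAntidiag (univ : Finset α) n,
      (univ.filter fun xv : Fin n → α => cnt xv = c).card * ∏ a, (K a) ^ (c a)
        ≤ S.card * ∏ a, (K a) ^ (K a) := by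
    intro c hc
    have hcsum : ∑ a, c a = n := (mem_piAntidiag.mp hc).1
    have hA := card_cnt_mul_prod_factorial (n := n) c hcsum
    have hB := card_cnt_mul_prod_factorial (n := n) K hKn
    have hpos : 0 < (∏ a, (c a)!) * ∏ a, (K a)! := by positivity
    refine Nat.le_of_mul_le_mul_right ?_ hpos
    calc (univ.filter fun xv : Fin n → α => cnt xv = c).card * (∏ a, K a ^ c a)
          * ((∏ a, (c a)!) * ∏ a, (K a)!)
        = ((univ.filter fun xv : Fin n → α => cnt xv = c).card * ∏ a, (c a)!)
            * ∏ a, ((K a)! * K a ^ c a) := by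
          rw [Finset.prod_mul_distrib]; ring
      _ = n ! * ∏ a, ((K a)! * K a ^ c a) := by rw [hA]
      _ ≤ n ! * ∏ a, ((c a)! * K a ^ K a) := by
          refine Nat.mul_le_mul_left _ (Finset.prod_le_prod' fun a _ => key_nat (K a) (c a))
      _ = S.card * (∏ a, K a ^ K a) * ((∏ a, (c a)!) * ∏ a, (K a)!) := by
          rw [← hB, Finset.prod_mul_distrib]; ring
  -- product formula
  have hform : ∀ (d : α → ℕ), (∑ a, d a = n) →
      ∏ a, P a ^ d a = (∏ a, ((K a : ℕ) : ℝ) ^ d a) / (n:ℝ) ^ n := by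
    intro d hd
    calc ∏ a, P a ^ d a = ∏ a, (((K a : ℝ)) ^ d a / (n:ℝ) ^ d a) := by
          refine Finset.prod_congr rfl fun a _ => ?_
          rw [hK a, div_pow]
      _ = (∏ a, ((K a : ℝ)) ^ d a) / ∏ a, (n:ℝ) ^ d a := by rw [Finset.prod_div_distrib]
      _ = (∏ a, ((K a : ℝ)) ^ d a) / (n:ℝ) ^ n := by rw [Finset.prod_pow_eq_pow_sum, hd]
  -- W c ≤ W K
  have hWle : ∀ c ∈ piAntidiag (univ : Finset α) n, W c ≤ W K := by
    intro c hc
    have hcsum : ∑ a, c a = n := (mem_piAntidiag.mp hc).1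
    have hcast : ((univ.filter fun xv : Fin n → α => cnt xv = c).card : ℝ)
          * ∏ a, ((K a : ℝ)) ^ (c a)
        ≤ (S.card : ℝ) * ∏ a, ((K a : ℝ)) ^ (K a) := by
      exact_mod_cast natkey c hc
    have hnn : (0:ℝ) < (n:ℝ) ^ n := by positivity
    have e1 : W c = (((univ.filter fun xv : Fin n → α => cnt xv = c).card : ℝ)
        * ∏ a, ((K a : ℝ)) ^ (c a)) / (n:ℝ) ^ n := by
      simp only [hWdef]; rw [hform c hcsum]; ring
    have e2 : W K = ((S.card : ℝ) * ∏ a, ((K a : ℝ)) ^ (K a)) / (n:ℝ) ^ n := by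
      simp only [hWdef]; rw [hform K hKn, hS]; ring
    rw [e1, e2, div_le_div_iff₀ hnn hnn]
    exact mul_le_mul_of_nonneg_right hcast hnn.le
  -- entropy formula
  have hterm : ∀ a, P a ^ K a = (2:ℝ) ^ ((K a : ℝ) * Real.logb 2 (P a)) := by
    intro a
    rcases eq_or_lt_of_le (hP0 a) with h0 | hpos
    · have hK0 : K a = 0 := by
        have h : (K a : ℝ) = 0 := by rw [hKcast a, ← h0, mul_zero]
        exact_mod_cast h
      rw [hK0]
      simp
    · have h2 : ((2:ℝ) ^ (Real.logb 2 (P a) * (K a : ℝ))) = P a ^ ((K a : ℝ)) := by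
        rw [Real.rpow_mul (by norm_num : (0:ℝ) ≤ 2), Real.rpow_logb two_pos (by norm_num) hpos]
      rw [← Real.rpow_natCast (P a) (K a), ← h2, mul_comm]
  have hE : ∏ a, P a ^ K a = (2:ℝ) ^ (-((n:ℝ) * Hent P)) := by
    have hsum2 : ∑ a, (K a : ℝ) * Real.logb 2 (P a) = -((n:ℝ) * Hent P) := by
      simp_rw [hKcast, mul_assoc]
      rw [← Finset.mul_sum, Hent]
      ring
    calc ∏ a, P a ^ K a = ∏ a, (2:ℝ) ^ ((K a : ℝ) * Real.logb 2 (P a)) :=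
          Finset.prod_congr rfl fun a _ => hterm a
      _ = ∏ a, Real.exp (Real.log 2 * ((K a : ℝ) * Real.logb 2 (P a))) := by
          refine Finset.prod_congr rfl fun a _ => ?_
          rw [Real.rpow_def_of_pos two_pos]
      _ = Real.exp (∑ a, Real.log 2 * ((K a : ℝ) * Real.logb 2 (P a))) :=
          (Real.exp_sum _ _).symm
      _ = Real.exp (Real.log 2 * ∑ a, (K a : ℝ) * Real.logb 2 (P a)) := by
          rw [Finset.mul_sum]
      _ = (2:ℝ) ^ (∑ a, (K a : ℝ) * Real.logb 2 (P a)) := by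
          rw [Real.rpow_def_of_pos two_pos]
      _ = (2:ℝ) ^ (-((n:ℝ) * Hent P)) := by rw [hsum2]
  have hKmem : K ∈ piAntidiag (univ : Finset α) n := by
    rw [mem_piAntidiag]; exact ⟨hKn, fun a _ => mem_univ a⟩
  have hWK : W K = (S.card : ℝ) * (2:ℝ) ^ (-((n:ℝ) * Hent P)) := by
    simp only [hWdef]; rw [hE, hS]
  have hWnonneg : ∀ c ∈ piAntidiag (univ : Finset α) n, 0 ≤ W c := by
    intro c _
    exact mul_nonneg (Nat.cast_nonneg _)
      (Finset.prod_nonneg fun a _ => pow_nonneg (hP0 a) _)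
  have h2x : (0:ℝ) < (2:ℝ) ^ ((n:ℝ) * Hent P) := Real.rpow_pos_of_pos two_pos _
  have h2xneg : (0:ℝ) < (2:ℝ) ^ (-((n:ℝ) * Hent P)) := Real.rpow_pos_of_pos two_pos _
  have hcancel : (2:ℝ) ^ (-((n:ℝ) * Hent P)) * (2:ℝ) ^ ((n:ℝ) * Hent P) = 1 := by
    rw [← Real.rpow_add two_pos]; simp
  constructor
  · -- lower bound
    have hcardPiNat : (piAntidiag (univ : Finset α) n).card ≤ (n+1) ^ (Fintype.card α) := by
      have hle : (piAntidiag (univ : Finset α) n).card ≤ (univ : Finset (α → Fin (n+1))).card := by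
        refine Finset.card_le_card_of_injOn
          (fun c a => (⟨min (c a) n, by omega⟩ : Fin (n+1))) (fun c _ => mem_univ _) ?_
        intro c₁ h₁ c₂ h₂ h
        rw [mem_coe, mem_piAntidiag] at h₁ h₂
        funext a
        have hb₁ : c₁ a ≤ n := h₁.1 ▸ Finset.single_le_sum
          (fun a _ => Nat.zero_le (c₁ a)) (mem_univ a)
        have hb₂ : c₂ a ≤ n := h₂.1 ▸ Finset.single_le_sum
          (fun a _ => Nat.zero_le (c₂ a)) (mem_univ a)
        have hv := congrArg Fin.val (congrFun h a)
        simp only at hv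
        omega
      simpa [Finset.card_univ, Fintype.card_fun, Fintype.card_fin] using hle
    have hcardPi : ((piAntidiag (univ : Finset α) n).card : ℝ)
        ≤ ((n:ℝ)+1) ^ ((Fintype.card α : ℝ)) := by
      have h1 : ((piAntidiag (univ : Finset α) n).card : ℝ) ≤ (((n+1) ^ (Fintype.card α) : ℕ) : ℝ) := by
        exact_mod_cast hcardPiNat
      refine h1.trans (le_of_eq ?_)
      push_cast
      rw [← Real.rpow_natCast ((n:ℝ)+1) (Fintype.card α)]
    have hsum_le : 1 ≤ ((piAntidiag (univ : Finset α) n).card : ℝ) * W K := by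
      rw [← hW]
      calc ∑ c ∈ piAntidiag (univ : Finset α) n, W c
          ≤ ∑ _c ∈ piAntidiag (univ : Finset α) n, W K := Finset.sum_le_sum hWle
        _ = ((piAntidiag (univ : Finset α) n).card : ℝ) * W K := by
            rw [Finset.sum_const, nsmul_eq_mul]
    have hWKnonneg : 0 ≤ W K := hWnonneg K hKmem
    have hsum_le2 : 1 ≤ ((n:ℝ)+1) ^ ((Fintype.card α : ℝ)) * W K :=
      hsum_le.trans (mul_le_mul_of_nonneg_right hcardPi hWKnonneg)
    have hb1 : ((n:ℝ)+1) ^ (-(Fintype.card α : ℝ)) * ((n:ℝ)+1) ^ ((Fintype.card α : ℝ)) = 1 := by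
      rw [← Real.rpow_add (by positivity)]; simp
    rw [hncard]
    calc ((n:ℝ)+1) ^ (-(Fintype.card α : ℝ)) * (2:ℝ) ^ ((n:ℝ) * Hent P)
        = (((n:ℝ)+1) ^ (-(Fintype.card α : ℝ)) * (2:ℝ) ^ ((n:ℝ) * Hent P)) * 1 := (mul_one _).symm
      _ ≤ (((n:ℝ)+1) ^ (-(Fintype.card α : ℝ)) * (2:ℝ) ^ ((n:ℝ) * Hent P))
            * (((n:ℝ)+1) ^ ((Fintype.card α : ℝ)) * W K) := by
          refine mul_le_mul_of_nonneg_left hsum_le2 ?_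
          positivity
      _ = (S.card : ℝ) * ((((n:ℝ)+1) ^ (-(Fintype.card α : ℝ)) * ((n:ℝ)+1) ^ ((Fintype.card α : ℝ)))
            * ((2:ℝ) ^ (-((n:ℝ) * Hent P)) * (2:ℝ) ^ ((n:ℝ) * Hent P))) := by
          rw [hWK]; ring
      _ = (S.card : ℝ) := by rw [hb1, hcancel]; ring
  · -- upper bound
    have hWK1 : W K ≤ 1 := by
      rw [← hW]
      exact Finset.single_le_sum hWnonneg hKmem
    rw [hncard]
    calc (S.card : ℝ)
        = ((S.card : ℝ) * (2:ℝ) ^ (-((n:ℝ) * Hent P))) * (2:ℝ) ^ ((n:ℝ) * Hent P) := by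
          rw [mul_assoc, hcancel, mul_one]
      _ ≤ 1 * (2:ℝ) ^ ((n:ℝ) * Hent P) := by
          refine mul_le_mul_of_nonneg_right ?_ h2x.le
          rw [← hWK]; exact hWK1
      _ = (2:ℝ) ^ ((n:ℝ) * Hent P) := one_mul _
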